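/- arXiv:2303.14238 — 12 statements merged into one kernel-verified Lean document; each statement's English description precedes it below -/
import Mathlib

section
/- If a motif (𝒮, ℛ, S⁻, S⁺) is an autocatalytic core, then all of the following hold: (1) there exists a positive flow v : ℛ → ℝ such that (S⁺ − S⁻).mulVec v is positive (productivity); (2) every row of S⁻ is semi-positive (every core species is consumed at least once); (3) every row of S⁺ is semi-positive (every core species is produced at least once); (4) every column of S⁻ is semi-positive (every reaction consumes some core species); (5) every column of S⁺ is semi-positive (every reaction produces some core species). -/
open Matrix

/-- A real vector is positive if all of its entries are strictly positive. -/
def Positive {ι : Type*} (v : ι → ℝ) : Prop := ∀ i, 0 < v i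

/-- A real vector is semi-positive if all of its entries are nonnegative
and the vector is nonzero. -/
def SemiPositive {ι : Type*} (v : ι → ℝ) : Prop := (∀ i, 0 ≤ v i) ∧ v ≠ 0

/-- A motif (given by its input matrix `Sm` and output matrix `Sp`) is
exclusively autocatalytic if (i) there is a positive flow `v` with
`(Sp - Sm).mulVec v` positive (productivity), (ii) every row of `Sm` is
semi-positive, and (iii) every column of `Sm` is semi-positive. -/
def ExclusivelyAutocatalytic {𝒮 ℛ : Type*} [Fintype 𝒮] [Fintype ℛ]
    (Sm Sp : Matrix 𝒮 ℛ ℝ) : Prop :=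
  (∃ v : ℛ → ℝ, Positive v ∧ Positive ((Sp - Sm).mulVec v)) ∧
  (∀ i : 𝒮, SemiPositive (fun r => Sm i r)) ∧
  (∀ r : ℛ, SemiPositive (fun i => Sm i r))

/-- An autocatalytic core is an exclusively autocatalytic motif none of
whose proper sub-motifs (restrictions to nonempty subsets of species and
reactions, not both the full sets) is exclusively autocatalytic. -/
def IsAutocatalyticCore {𝒮 ℛ : Type*} [Fintype 𝒮] [Fintype ℛ]
    (Sm Sp : Matrix 𝒮 ℛ ℝ) : Prop :=
  ExclusivelyAutocatalytic Sm Sp ∧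
  ∀ (S' : Finset 𝒮) (R' : Finset ℛ), S'.Nonempty → R'.Nonempty →
    ¬(S' = Finset.univ ∧ R' = Finset.univ) →
    ¬ ExclusivelyAutocatalytic
        (fun (i : S') (r : R') => Sm i.1 r.1)
        (fun (i : S') (r : R') => Sp i.1 r.1)

lemma SemiPositive.exists_pos {ι : Type*} {w : ι → ℝ} (h : SemiPositive w) :
    ∃ i, 0 < w i := by
  obtain ⟨i, hi⟩ := Function.ne_iff.mp h.2
  exact ⟨i, lt_of_le_of_ne (h.1 i) (Ne.symm hi)⟩

/-- Theorem: properties of an autocatalytic core: productivity, every core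
species is consumed and produced at least once, and every reaction consumes
and produces some core species. -/
theorem autocatalyticCore_properties {𝒮 ℛ : Type*}
    [Fintype 𝒮] [Fintype ℛ] [Nonempty 𝒮] [Nonempty ℛ]
    (Sm Sp : Matrix 𝒮 ℛ ℝ)
    (hSm : ∀ i r, 0 ≤ Sm i r) (hSp : ∀ i r, 0 ≤ Sp i r)
    (hcore : IsAutocatalyticCore Sm Sp) :
    (∃ v : ℛ → ℝ, Positive v ∧ Positive ((Sp - Sm).mulVec v)) ∧
    (∀ i : 𝒮, SemiPositive (fun r => Sm i r)) ∧
    (∀ i : 𝒮, SemiPositive (fun r => Sp i r)) ∧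
    (∀ r : ℛ, SemiPositive (fun i => Sm i r)) ∧
    (∀ r : ℛ, SemiPositive (fun i => Sp i r)) := by
  classical
  obtain ⟨⟨⟨v, hv, hprod⟩, hrow, hcol⟩, hmin⟩ := hcore
  refine ⟨⟨v, hv, hprod⟩, hrow, ?_, hcol, ?_⟩
  · -- rows of Sp
    intro i
    refine ⟨fun r => hSp i r, ?_⟩
    intro h0
    have hle : ((Sp - Sm).mulVec v) i ≤ 0 := by
      rw [mulVec, dotProduct]
      apply Finset.sum_nonpos
      intro r _
      have hSpr : Sp i r = 0 := congrFun h0 r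
      have h1 : (Sp - Sm) i r = - Sm i r := by simp [Matrix.sub_apply, hSpr]
      rw [h1]
      exact mul_nonpos_of_nonpos_of_nonneg (by linarith [hSm i r]) (le_of_lt (hv r))
    linarith [hprod i]
  · -- columns of Sp
    intro r₀
    refine ⟨fun i => hSp i r₀, ?_⟩
    intro h0
    have hSp0 : ∀ i, Sp i r₀ = 0 := fun i => congrFun h0 i
    by_cases hR : (Finset.univ.erase r₀).Nonempty
    · set R' := Finset.univ.erase r₀ with hR'def
      set S' := Finset.univ.filter (fun i => ∃ r, r ≠ r₀ ∧ 0 < Sm i r) with hS'def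
      have hS' : S'.Nonempty := by
        obtain ⟨r, hr⟩ := hR
        obtain ⟨i, hi⟩ := (hcol r).exists_pos
        exact ⟨i, Finset.mem_filter.mpr
          ⟨Finset.mem_univ i, r, (Finset.mem_erase.mp hr).1, hi⟩⟩
      refine hmin S' R' hS' hR ?_ ?_
      · rintro ⟨-, hRu⟩
        have : r₀ ∈ R' := hRu ▸ Finset.mem_univ r₀
        exact (Finset.mem_erase.mp this).1 rfl
      · refine ⟨⟨fun r => v r.1, fun r => hv r.1, ?_⟩, ?_, ?_⟩
        · -- productivity of submotif
          intro i
          have key : ∑ r : R', (Sp i.1 r.1 - Sm i.1 r.1) * v r.1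
              = (∑ r : ℛ, (Sp i.1 r - Sm i.1 r) * v r) + Sm i.1 r₀ * v r₀ := by
            rw [Finset.sum_coe_sort R' (fun r => (Sp i.1 r - Sm i.1 r) * v r)]
            rw [← Finset.sum_erase_add Finset.univ _ (Finset.mem_univ r₀)]
            have : (Sp i.1 r₀ - Sm i.1 r₀) * v r₀ = - (Sm i.1 r₀ * v r₀) := by
              rw [hSp0 i.1]; ring
            rw [this]; ring
          have hfull : 0 < ∑ r : ℛ, (Sp i.1 r - Sm i.1 r) * v r := by
            have := hprod i.1
            rwa [mulVec, dotProduct] at this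
            
          have hrest : 0 < ∑ r : R', (Sp i.1 r.1 - Sm i.1 r.1) * v r.1 := by
            rw [key]
            have := mul_nonneg (hSm i.1 r₀) (le_of_lt (hv r₀))
            linarith
          show 0 < mulVec _ _ i
          rw [mulVec, dotProduct]
          convert hrest using 1
          rfl
        · -- rows of restricted Sm
          intro i
          have hi := Finset.mem_filter.mp i.2
          obtain ⟨r, hrne, hrpos⟩ := hi.2
          have hrR : r ∈ R' := Finset.mem_erase.mpr ⟨hrne, Finset.mem_univ r⟩
          refine ⟨fun r => hSm i.1 r.1, ?_⟩
          intro hz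
          have := congrFun hz ⟨r, hrR⟩
          simp only [Pi.zero_apply] at this
          linarith
        · -- columns of restricted Sm
          intro r
          obtain ⟨i, hi⟩ := (hcol r.1).exists_pos
          have hiS : i ∈ S' := Finset.mem_filter.mpr
            ⟨Finset.mem_univ i, r.1, (Finset.mem_erase.mp r.2).1, hi⟩
          refine ⟨fun i => hSm i.1 r.1, ?_⟩
          intro hz
          have := congrFun hz ⟨i, hiS⟩
          simp only [Pi.zero_apply] at this
          linarith
    · -- ℛ = {r₀}
      have hall : ∀ r : ℛ, r = r₀ := by
        intro r
        by_contra hne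
        exact hR ⟨r, Finset.mem_erase.mpr ⟨hne, Finset.mem_univ r⟩⟩
      obtain ⟨i⟩ := ‹Nonempty 𝒮›
      have hle : ((Sp - Sm).mulVec v) i ≤ 0 := by
        rw [mulVec, dotProduct]
        apply Finset.sum_nonpos
        intro r _
        rw [hall r]
        have h1 : (Sp - Sm) i r₀ = - Sm i r₀ := by
          simp [Matrix.sub_apply, hSp0 i]
        rw [h1]
        exact mul_nonpos_of_nonpos_of_nonneg (by linarith [hSm i r₀]) (le_of_lt (hv r₀))
      linarith [hprod i]
end

section
/- If a motif (𝒮, ℛ, S⁻, S⁺) is an autocatalytic core, then every species of the core is the only reactant of at least one reaction: for every i ∈ 𝒮 there exists r ∈ ℛ such that S⁻ i r > 0 and S⁻ j r = 0 for all j ≠ i. -/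
open Matrix

/-- Theorem: in an autocatalytic core, every species is the only reactant of
at least one reaction. -/
theorem autocatalyticCore_species_only_reactant {𝒮 ℛ : Type*}
    [Fintype 𝒮] [Fintype ℛ] [Nonempty 𝒮] [Nonempty ℛ]
    (Sm Sp : Matrix 𝒮 ℛ ℝ)
    (hSm : ∀ i r, 0 ≤ Sm i r) (hSp : ∀ i r, 0 ≤ Sp i r)
    (hcore : IsAutocatalyticCore Sm Sp) :
    ∀ i : 𝒮, ∃ r : ℛ, 0 < Sm i r ∧ ∀ j : 𝒮, j ≠ i → Sm j r = 0 := by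
  classical
  intro i
  by_contra h
  push_neg at h
  obtain ⟨hEA, hmin⟩ := hcore
  by_cases hsing : ∀ j : 𝒮, j = i
  · obtain ⟨hnn, hne⟩ := hEA.2.1 i
    have : ∃ r, Sm i r ≠ 0 := by
      by_contra hz; push_neg at hz; exact hne (funext hz)
    obtain ⟨r, hr⟩ := this
    have hpos := lt_of_le_of_ne (hSm i r) (Ne.symm hr)
    obtain ⟨j, hji, _⟩ := h r hpos
    exact hji (hsing j)
  · push_neg at hsing
    obtain ⟨k, hk⟩ := hsing
    set S' : Finset 𝒮 := Finset.univ.erase i with hS'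
    have hS'ne : S'.Nonempty := ⟨k, Finset.mem_erase.2 ⟨hk, Finset.mem_univ k⟩⟩
    refine hmin S' Finset.univ hS'ne Finset.univ_nonempty ?_ ?_
    · rintro ⟨h1, -⟩
      have : i ∈ S' := h1 ▸ Finset.mem_univ i
      exact (Finset.mem_erase.1 this).1 rfl
    refine ⟨?_, ?_, ?_⟩
    · obtain ⟨v, hv, hSv⟩ := hEA.1
      refine ⟨fun r => v r.1, fun r => hv r.1, ?_⟩
      intro i'
      have heq : Matrix.mulVec
            (((fun (a : S') (b : (Finset.univ : Finset ℛ)) => Sp a.1 b.1) :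
              Matrix ↥S' ↥(Finset.univ : Finset ℛ) ℝ)
            - fun (a : S') (b : (Finset.univ : Finset ℛ)) => Sm a.1 b.1)
            (fun r => v r.1) i' = (Sp - Sm).mulVec v i'.1 := by
        simp only [Matrix.mulVec, dotProduct, Matrix.sub_apply, Pi.sub_apply]
        exact Fintype.sum_equiv (Equiv.subtypeUnivEquiv (fun r => Finset.mem_univ r))
          _ _ (fun r => rfl)
      exact lt_of_lt_of_eq (hSv i'.1) heq.symm
    · intro i'
      obtain ⟨hnn, hne⟩ := hEA.2.1 i'.1
      refine ⟨fun r => hnn r.1, ?_⟩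
      intro hz
      apply hne
      funext r
      exact congrFun hz ⟨r, Finset.mem_univ r⟩
    · intro r
      obtain ⟨hnn, hne⟩ := hEA.2.2 r.1
      refine ⟨fun j => hnn j.1, ?_⟩
      have hex : ∃ j, j ≠ i ∧ Sm j r.1 ≠ 0 := by
        by_cases hi : 0 < Sm i r.1
        · exact h r.1 hi
        · have hi0 : Sm i r.1 = 0 := le_antisymm (not_lt.1 hi) (hSm i r.1)
          have : ∃ j, Sm j r.1 ≠ 0 := by
            by_contra hz; push_neg at hz; exact hne (funext hz)
          obtain ⟨j, hj⟩ := this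
          exact ⟨j, fun hji => hj (by rw [hji]; exact hi0), hj⟩
      obtain ⟨j, hji, hj⟩ := hex
      intro hz
      exact hj (congrFun hz ⟨j, Finset.mem_erase.2 ⟨hji, Finset.mem_univ j⟩⟩)
end

section
/- If a motif (𝒮, ℛ, S⁻, S⁺) is an autocatalytic core, then its stoichiometric matrix 𝕊 = S⁺ − S⁻ is a minimal semi-positive matrix: 𝕊 is semi-positive, and for every r₀ ∈ ℛ the matrix obtained from 𝕊 by deleting column r₀ (i.e., the restriction of 𝕊 to the columns {r : r ≠ r₀}) is not semi-positive. -/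
open Matrix

/-- A real matrix is semi-positive (in the sense of
Johnson–Smith–Tsatsomeros) if there is a positive vector `v` such that
`A.mulVec v` is positive. -/
def MatrixSemiPositive {m n : Type*} [Fintype n] (A : Matrix m n ℝ) : Prop :=
  ∃ v : n → ℝ, Positive v ∧ Positive (A.mulVec v)

/-- Theorem: the stoichiometric matrix of an autocatalytic core is a minimal
semi-positive matrix: it is semi-positive, and deleting any column destroys
semi-positivity. -/
theorem autocatalyticCore_minimal_semiPositive {𝒮 ℛ : Type*}
    [Fintype 𝒮] [Fintype ℛ] [Nonempty 𝒮] [Nonempty ℛ] [DecidableEq ℛ]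
    (Sm Sp : Matrix 𝒮 ℛ ℝ)
    (hSm : ∀ i r, 0 ≤ Sm i r) (hSp : ∀ i r, 0 ≤ Sp i r)
    (hcore : IsAutocatalyticCore Sm Sp) :
    MatrixSemiPositive (Sp - Sm) ∧
    ∀ r₀ : ℛ, ¬ MatrixSemiPositive
      (fun (i : 𝒮) (r : {r : ℛ // r ≠ r₀}) => (Sp - Sm) i r.1) := by
  classical
  refine ⟨hcore.1.1, ?_⟩
  rintro r₀ ⟨v, hv, hvP⟩
  -- case: r₀ is the only reaction
  by_cases hR : ∃ r : ℛ, r ≠ r₀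
  · obtain ⟨r₁, hr₁⟩ := hR
    set R' : Finset ℛ := {r₀}ᶜ with hR'def
    have hmemR : ∀ r : ℛ, r ∈ R' ↔ r ≠ r₀ := by
      intro r; simp [hR'def]
    set S' : Finset 𝒮 := Finset.univ.filter (fun i => ∃ r, r ≠ r₀ ∧ 0 < Sm i r) with hS'def
    have hmemS : ∀ i : 𝒮, i ∈ S' ↔ ∃ r, r ≠ r₀ ∧ 0 < Sm i r := by
      intro i; simp [hS'def]
    -- from a semi-positive column r (r ≠ r₀), get a member of S'
    have hcol : ∀ r : ℛ, ∃ i, 0 < Sm i r := by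
      intro r
      obtain ⟨hnn, hne⟩ := hcore.1.2.2 r
      obtain ⟨i, hi⟩ := Function.ne_iff.mp hne
      exact ⟨i, lt_of_le_of_ne (hnn i) (Ne.symm hi)⟩
    have hS'ne : S'.Nonempty := by
      obtain ⟨i, hi⟩ := hcol r₁
      exact ⟨i, (hmemS i).mpr ⟨r₁, hr₁, hi⟩⟩
    have hR'ne : R'.Nonempty := ⟨r₁, (hmemR r₁).mpr hr₁⟩
    have hproper : ¬(S' = Finset.univ ∧ R' = Finset.univ) := by
      rintro ⟨-, h⟩
      have : r₀ ∈ R' := h ▸ Finset.mem_univ r₀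
      exact ((hmemR r₀).mp this) rfl
    apply hcore.2 S' R' hS'ne hR'ne hproper
    let e : (R' : Type _) ≃ {r : ℛ // r ≠ r₀} := Equiv.subtypeEquivRight hmemR
    refine ⟨⟨fun r => v (e r), fun r => hv _, ?_⟩, ?_, ?_⟩
    · intro i
      have h := hvP i.1
      have hsum : ∀ j : 𝒮, (∑ r : {r : ℛ // r ≠ r₀}, (Sp j r.1 - Sm j r.1) * v r)
          = ∑ r : R', (Sp j r.1 - Sm j r.1) * v (e r) := by
        intro j
        exact (Fintype.sum_equiv e (fun r => (Sp j r.1 - Sm j r.1) * v (e r)) (fun r => (Sp j r.1 - Sm j r.1) * v r) (fun r => by cases r; rfl)).symm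
      simp [Matrix.mulVec, dotProduct, Matrix.sub_apply, hsum i.1] at h; exact h
    · rintro ⟨i, hi⟩
      obtain ⟨r, hrne, hr⟩ := (hmemS i).mp hi
      refine ⟨fun r => hSm _ _, ?_⟩
      intro h0
      have := congrFun h0 ⟨r, (hmemR r).mpr hrne⟩
      simp only [Pi.zero_apply] at this
      exact hr.ne' this
    · rintro ⟨r, hr⟩
      obtain ⟨i, hi⟩ := hcol r
      have hiS : i ∈ S' := (hmemS i).mpr ⟨r, (hmemR r).mp hr, hi⟩
      refine ⟨fun i => hSm _ _, ?_⟩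
      intro h0
      have := congrFun h0 ⟨i, hiS⟩
      simp only [Pi.zero_apply] at this
      exact hi.ne' this
  · push_neg at hR
    haveI : IsEmpty {r : ℛ // r ≠ r₀} := ⟨fun r => r.2 (hR r.1)⟩
    have h := hvP (Classical.arbitrary 𝒮)
    simp [Matrix.mulVec, dotProduct] at h
end

section
/- If a motif (𝒮, ℛ, S⁻, S⁺) is an autocatalytic core, then Fintype.card 𝒮 = Fintype.card ℛ, and the columns of the stoichiometric matrix 𝕊 = S⁺ − S⁻ are linearly independent over ℝ (equivalently, the linear map v ↦ 𝕊.mulVec v is injective); in particular, for any bijection e : ℛ ≃ 𝒮, the square matrix (i, j) ↦ 𝕊 i (e.symm j) is invertible. -/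
open Matrix

lemma core_ker_aux {𝒮 ℛ : Type*} [Fintype 𝒮] [Fintype ℛ] [Nonempty 𝒮]
    (Sm Sp : Matrix 𝒮 ℛ ℝ) (hSm : ∀ i r, 0 ≤ Sm i r)
    (hcore : IsAutocatalyticCore Sm Sp)
    (u : ℛ → ℝ) (hu : (Sp - Sm).mulVec u = 0) (hpos : ∃ r, 0 < u r) : False := by
  classical
  obtain ⟨v, hv, hSv⟩ := hcore.1.1
  set T : Finset ℛ := Finset.univ.filter (fun r => 0 < u r) with hT
  have hTne : T.Nonempty := by
    obtain ⟨r, hr⟩ := hpos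
    exact ⟨r, by simp [hT, hr]⟩
  obtain ⟨r₀, hr₀T, hmin⟩ := T.exists_min_image (fun r => v r / u r) hTne
  have hur₀ : 0 < u r₀ := by simpa [hT] using hr₀T
  set t : ℝ := v r₀ / u r₀ with ht
  have ht0 : 0 < t := div_pos (hv r₀) hur₀
  set v' : ℛ → ℝ := fun r => v r - t * u r with hv'
  have hv'nonneg : ∀ r, 0 ≤ v' r := by
    intro r
    by_cases h : 0 < u r
    · have hle : t ≤ v r / u r := hmin r (by simp [hT, h])
      have := (le_div_iff₀ h).mp hle
      simp only [hv']; linarith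
    · push_neg at h
      have hmul : t * u r ≤ 0 := mul_nonpos_of_nonneg_of_nonpos ht0.le h
      have := hv r
      simp only [hv']; linarith
  have hv'r₀ : v' r₀ = 0 := by
    simp only [hv', ht]
    field_simp
    ring
  have hveq : v' = v - t • u := by
    funext r; simp [hv', smul_eq_mul]
  have hSv' : Positive ((Sp - Sm).mulVec v') := by
    have h2 : (Sp - Sm).mulVec v' = (Sp - Sm).mulVec v := by
      rw [hveq, Matrix.mulVec_sub, Matrix.mulVec_smul, hu, smul_zero, sub_zero]
    rw [h2]; exact hSv
  set R' : Finset ℛ := Finset.univ.filter (fun r => 0 < v' r) with hR'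
  have hv'zero : ∀ r ∉ R', v' r = 0 := by
    intro r hr
    have h3 : ¬ 0 < v' r := by simpa [hR'] using hr
    exact le_antisymm (not_lt.mp h3) (hv'nonneg r)
  have hR'ne : R'.Nonempty := by
    by_contra h
    have hz : v' = 0 := by
      funext r
      exact hv'zero r (by simp [Finset.not_nonempty_iff_eq_empty.mp h])
    obtain ⟨i⟩ := (inferInstance : Nonempty 𝒮)
    have h4 := hSv' i
    rw [hz, Matrix.mulVec_zero] at h4
    simp at h4
  have hR'top : R' ≠ Finset.univ := by
    intro h
    have h5 : r₀ ∈ R' := h ▸ Finset.mem_univ r₀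
    rw [hR', Finset.mem_filter] at h5
    rw [hv'r₀] at h5
    exact lt_irrefl _ h5.2
  set S' : Finset 𝒮 := Finset.univ.filter (fun i => ∃ r ∈ R', 0 < Sm i r) with hS'
  have hS'ne : S'.Nonempty := by
    obtain ⟨r, hr⟩ := hR'ne
    obtain ⟨i, hi⟩ := Function.ne_iff.mp (hcore.1.2.2 r).2
    refine ⟨i, ?_⟩
    simp only [hS', Finset.mem_filter, Finset.mem_univ, true_and]
    exact ⟨r, hr, lt_of_le_of_ne (hSm i r) (by simpa using Ne.symm hi)⟩
  have hsum : ∀ (i : 𝒮), ∑ r : R', ((Sp - Sm) i r.1) * v' r.1 = ((Sp - Sm).mulVec v') i := by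
    intro i
    rw [Finset.sum_coe_sort R' (fun r => ((Sp - Sm) i r) * v' r)]
    rw [Matrix.mulVec, dotProduct]
    exact Finset.sum_subset (Finset.subset_univ R')
      (fun r _ hr => by rw [hv'zero r hr, mul_zero])
  apply hcore.2 S' R' hS'ne hR'ne (fun h => hR'top h.2)
  refine ⟨⟨fun r => v' r.1, fun r => (Finset.mem_filter.mp r.2).2, fun i => ?_⟩,
    fun i => ⟨fun r => hSm _ _, ?_⟩, fun r => ⟨fun i => hSm _ _, ?_⟩⟩
  · have heq : (((fun (i : S') (r : R') => Sp i.1 r.1) - fun (i : S') (r : R') => Sm i.1 r.1)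
        *ᵥ fun r => v' r.1) i = ((Sp - Sm) *ᵥ v') i.1 := by
      rw [← hsum i.1]
      simp [Matrix.mulVec, dotProduct, Matrix.sub_apply]
    exact lt_of_lt_of_eq (hSv' i.1) heq.symm
  · obtain ⟨r, hrR, hrpos⟩ := by
      have := i.2
      simpa only [hS', Finset.mem_filter, Finset.mem_univ, true_and] using this
    intro h0
    have := congrFun h0 ⟨r, hrR⟩
    simp only [Pi.zero_apply] at this
    rw [this] at hrpos
    exact lt_irrefl _ hrpos
  · obtain ⟨i, hi⟩ := Function.ne_iff.mp (hcore.1.2.2 r.1).2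
    have hipos : 0 < Sm i r.1 := lt_of_le_of_ne (hSm i r.1) (by simpa using Ne.symm hi)
    have hiS : i ∈ S' := by
      simp only [hS', Finset.mem_filter, Finset.mem_univ, true_and]
      exact ⟨r.1, r.2, hipos⟩
    intro h0
    have := congrFun h0 ⟨i, hiS⟩
    simp only [Pi.zero_apply] at this
    rw [this] at hipos
    exact lt_irrefl _ hipos

lemma core_ker {𝒮 ℛ : Type*} [Fintype 𝒮] [Fintype ℛ] [Nonempty 𝒮]
    (Sm Sp : Matrix 𝒮 ℛ ℝ) (hSm : ∀ i r, 0 ≤ Sm i r)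
    (hcore : IsAutocatalyticCore Sm Sp) :
    ∀ u : ℛ → ℝ, (Sp - Sm).mulVec u = 0 → u = 0 := by
  intro u hu
  by_contra h
  obtain ⟨r, hr⟩ := Function.ne_iff.mp h
  simp only [Pi.zero_apply] at hr
  rcases hr.lt_or_gt with hneg | hpos
  · refine core_ker_aux Sm Sp hSm hcore (-u) ?_ ⟨r, by simpa using hneg⟩
    rw [Matrix.mulVec_neg, hu, neg_zero]
  · exact core_ker_aux Sm Sp hSm hcore u hu ⟨r, hpos⟩

lemma core_card_le {𝒮 ℛ : Type*} [Fintype 𝒮] [Fintype ℛ] [Nonempty 𝒮] [Nonempty ℛ]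
    (Sm Sp : Matrix 𝒮 ℛ ℝ) (hSm : ∀ i r, 0 ≤ Sm i r)
    (hcore : IsAutocatalyticCore Sm Sp) :
    Fintype.card 𝒮 ≤ Fintype.card ℛ := by
  classical
  rcases le_or_gt (Fintype.card 𝒮) 1 with h1 | h2
  · exact h1.trans Fintype.card_pos
  have key : ∀ i₀ : 𝒮, ∃ r : ℛ, ∀ i, i ≠ i₀ → Sm i r = 0 := by
    intro i₀
    have hS'ne : (Finset.univ.erase i₀).Nonempty := by
      rw [← Finset.card_pos, Finset.card_erase_of_mem (Finset.mem_univ _), Finset.card_univ]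
      omega
    have hne := hcore.2 (Finset.univ.erase i₀) Finset.univ hS'ne Finset.univ_nonempty
      (fun h => Finset.notMem_erase i₀ Finset.univ (by rw [h.1]; exact Finset.mem_univ i₀))
    by_contra hcontra
    push_neg at hcontra
    apply hne
    obtain ⟨v, hv, hSv⟩ := hcore.1.1
    have hsum : ∀ (i : 𝒮), ∑ r : (Finset.univ : Finset ℛ), ((Sp - Sm) i r.1) * v r.1
        = ((Sp - Sm).mulVec v) i := by
      intro i
      rw [Finset.sum_coe_sort (Finset.univ : Finset ℛ) (fun r => ((Sp - Sm) i r) * v r)]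
      rw [Matrix.mulVec, dotProduct]
    refine ⟨⟨fun r => v r.1, fun r => hv _, fun i => ?_⟩,
      fun i => ⟨fun r => hSm _ _, ?_⟩, fun r => ⟨fun i => hSm _ _, ?_⟩⟩
    · have heq : (((fun (i : (Finset.univ.erase i₀ : Finset 𝒮)) (r : (Finset.univ : Finset ℛ)) => Sp i.1 r.1)
          - fun (i : (Finset.univ.erase i₀ : Finset 𝒮)) (r : (Finset.univ : Finset ℛ)) => Sm i.1 r.1)
          *ᵥ fun r => v r.1) i = ((Sp - Sm) *ᵥ v) i.1 := by
        rw [← hsum i.1]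
        simp [Matrix.mulVec, dotProduct, Matrix.sub_apply]
      exact lt_of_lt_of_eq (hSv i.1) heq.symm
    · obtain ⟨r, hr⟩ := Function.ne_iff.mp (hcore.1.2.1 i.1).2
      intro h0
      have := congrFun h0 ⟨r, Finset.mem_univ r⟩
      simp only [Pi.zero_apply] at this hr
      exact hr this
    · obtain ⟨i, hi0, hi⟩ := hcontra r.1
      have hiS : i ∈ Finset.univ.erase i₀ := Finset.mem_erase.mpr ⟨hi0, Finset.mem_univ i⟩
      intro h0
      have := congrFun h0 ⟨i, hiS⟩
      simp only [Pi.zero_apply] at this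
      exact hi this
  choose f hf using key
  have hinj : Function.Injective f := by
    intro i₀ i₁ h
    by_contra hne
    apply (hcore.1.2.2 (f i₀)).2
    funext i
    by_cases hi : i = i₀
    · subst hi
      rw [h]
      exact hf i₁ i hne
    · exact hf i₀ i hi
  exact Fintype.card_le_of_injective f hinj

/-- Theorem: the stoichiometric matrix of an autocatalytic core is square
(there are as many reactions as core species) and its columns are linearly
independent (the map `v ↦ 𝕊.mulVec v` is injective); in particular any
square arrangement of it via a bijection `e : ℛ ≃ 𝒮` is invertible. -/
theorem autocatalyticCore_square_invertible {𝒮 ℛ : Type*}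
    [Fintype 𝒮] [Fintype ℛ] [Nonempty 𝒮] [Nonempty ℛ] [DecidableEq 𝒮]
    (Sm Sp : Matrix 𝒮 ℛ ℝ)
    (hSm : ∀ i r, 0 ≤ Sm i r) (hSp : ∀ i r, 0 ≤ Sp i r)
    (hcore : IsAutocatalyticCore Sm Sp) :
    Fintype.card 𝒮 = Fintype.card ℛ ∧
    Function.Injective (fun v : ℛ → ℝ => (Sp - Sm).mulVec v) ∧
    ∀ e : ℛ ≃ 𝒮, IsUnit ((Sp - Sm).submatrix id ⇑e.symm) := by
  classical
  have hker := core_ker Sm Sp hSm hcore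
  have hinj : Function.Injective (fun v : ℛ → ℝ => (Sp - Sm).mulVec v) := by
    intro a b hab
    have h0 : (Sp - Sm).mulVec (a - b) = 0 := by
      rw [Matrix.mulVec_sub]
      simpa [sub_eq_zero] using hab
    have := hker _ h0
    exact sub_eq_zero.mp this
  have hcard2 : Fintype.card ℛ ≤ Fintype.card 𝒮 := by
    have hlin : Function.Injective ((Sp - Sm).mulVecLin) := by
      intro a b hab
      exact hinj (by simpa [Matrix.sub_mulVec] using hab)
    calc Fintype.card ℛ = Module.finrank ℝ (ℛ → ℝ) :=
          (Module.finrank_fintype_fun_eq_card ℝ).symm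
      _ ≤ Module.finrank ℝ (𝒮 → ℝ) := LinearMap.finrank_le_finrank_of_injective hlin
      _ = Fintype.card 𝒮 := Module.finrank_fintype_fun_eq_card ℝ
  refine ⟨le_antisymm (core_card_le Sm Sp hSm hcore) hcard2, hinj, fun e => ?_⟩
  set M := (Sp - Sm).submatrix id ⇑e.symm with hM
  have hMker : ∀ w : 𝒮 → ℝ, M.mulVec w = 0 → w = 0 := by
    intro w hw
    have hMw : M.mulVec w = (Sp - Sm).mulVec (fun r => w (e r)) := by
      funext i
      simp only [hM, Matrix.mulVec, dotProduct, Matrix.submatrix_apply, id_eq]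
      exact Fintype.sum_equiv e.symm _ _ (fun j => by simp)
    rw [hMw] at hw
    have := hker _ hw
    funext j
    have h := congrFun this (e.symm j)
    simpa using h
  have hdet : M.det ≠ 0 := by
    intro hd
    obtain ⟨w, hw0, hw⟩ := Matrix.exists_mulVec_eq_zero_iff.mpr hd
    exact hw0 (hMker w hw)
  exact (Matrix.isUnit_iff_isUnit_det M).mpr (isUnit_iff_ne_zero.mpr hdet)
end

section
/- Let (𝒮, ℛ, S⁻, S⁺) be an autocatalytic core and let e : ℛ ≃ 𝒮 be a bijection (one exists because a core is square). Then the square matrix A : Matrix 𝒮 𝒮 ℝ defined by A i j = (S⁺ − S⁻) i (e.symm j) is invertible, every entry of A⁻¹ is nonnegative, and every column of A⁻¹ is semi-positive (i.e., nonnegative and nonzero). -/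
open Matrix

lemma key_lemma {𝒮 ℛ : Type*} [Fintype 𝒮] [Fintype ℛ] [Nonempty 𝒮] [Nonempty ℛ]
    (Sm Sp : Matrix 𝒮 ℛ ℝ) (hSm : ∀ i r, 0 ≤ Sm i r)
    (hcore : IsAutocatalyticCore Sm Sp)
    (w : ℛ → ℝ) (hw : ∀ i, 0 ≤ (Sp - Sm).mulVec w i) :
    ∀ r, 0 ≤ w r := by
  classical
  by_contra hcon
  push_neg at hcon
  obtain ⟨rbad, hrbad⟩ := hcon
  obtain ⟨⟨v, hv, hprod⟩, hrows, hcols⟩ := hcore.1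
  set N : Finset ℛ := Finset.univ.filter (fun r => w r < 0) with hN
  have hNne : N.Nonempty := ⟨rbad, by simp [hN, hrbad]⟩
  obtain ⟨rs, hrsN, hrsmin⟩ := N.exists_min_image (fun r => v r / (-w r)) hNne
  have hws : w rs < 0 := by simpa [hN] using hrsN
  set t : ℝ := v rs / (-w rs) with ht
  have htpos : 0 < t := div_pos (hv rs) (by linarith)
  set v' : ℛ → ℝ := fun r => v r + t * w r with hv'
  have hv'nonneg : ∀ r, 0 ≤ v' r := by
    intro r
    by_cases h : w r < 0
    · have hmem : r ∈ N := by simp [hN, h]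
      have hle := hrsmin r hmem
      have h2 : t * (-w r) ≤ v r := (le_div_iff₀ (by linarith : (0:ℝ) < -w r)).mp hle
      simp only [hv']
      nlinarith
    · push_neg at h
      have := hv r
      simp only [hv']
      nlinarith
  have hv'rs : v' rs = 0 := by
    have h0 : w rs ≠ 0 := ne_of_lt hws
    simp only [hv', ht]
    have hkey : t * w rs = -(v rs) := by
      rw [ht, div_mul_eq_mul_div, div_neg, mul_div_assoc, div_self h0, mul_one]
    rw [hkey, add_neg_cancel]
  have hSv' : ∀ i, 0 < (Sp - Sm).mulVec v' i := by
    intro i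
    have hv'eq : v' = v + t • w := rfl
    rw [hv'eq, Matrix.mulVec_add, Matrix.mulVec_smul]
    have h1 := hw i
    have h2 := hprod i
    simp only [Pi.add_apply, Pi.smul_apply, smul_eq_mul]
    nlinarith
  set R' : Finset ℛ := Finset.univ.filter (fun r => 0 < v' r) with hR'
  set S' : Finset 𝒮 := Finset.univ.filter (fun i => ∃ r ∈ R', 0 < Sm i r) with hS'
  have hv'zero : ∀ r, r ∉ R' → v' r = 0 := by
    intro r hr
    have := hv'nonneg r
    simp only [hR', Finset.mem_filter, Finset.mem_univ, true_and, not_lt] at hr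
    linarith
  have hR'ne : R'.Nonempty := by
    by_contra h
    rw [Finset.not_nonempty_iff_eq_empty] at h
    have hz : v' = 0 := funext fun r => hv'zero r (by simp [h])
    have := hSv' (Classical.arbitrary 𝒮)
    rw [hz] at this
    simp [Matrix.mulVec_zero] at this
  have hS'ne : S'.Nonempty := by
    obtain ⟨r, hr⟩ := hR'ne
    obtain ⟨hnn, hne⟩ := hcols r
    have hex : ∃ i, Sm i r ≠ 0 := by
      by_contra h; push_neg at h; exact hne (funext h)
    obtain ⟨i, hi⟩ := hex
    refine ⟨i, ?_⟩
    simp only [hS', Finset.mem_filter, Finset.mem_univ, true_and]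
    exact ⟨r, hr, lt_of_le_of_ne (hSm i r) (Ne.symm hi)⟩
  have hproper : ¬(S' = Finset.univ ∧ R' = Finset.univ) := by
    rintro ⟨-, hRu⟩
    have hmem : rs ∈ R' := hRu ▸ Finset.mem_univ rs
    simp only [hR', Finset.mem_filter, Finset.mem_univ, true_and, hv'rs] at hmem
    exact lt_irrefl 0 hmem
  apply hcore.2 S' R' hS'ne hR'ne hproper
  refine ⟨⟨fun r => v' r.1, fun r => ?_, fun i => ?_⟩,
    fun i => ⟨fun r => hSm i.1 r.1, ?_⟩, fun r => ⟨fun i => hSm i.1 r.1, ?_⟩⟩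
  · have := r.2
    simp only [hR', Finset.mem_filter, Finset.mem_univ, true_and] at this
    exact this
  · show 0 < _
    simp only [Matrix.mulVec, dotProduct, Matrix.sub_apply]
    have heq : ∑ r : R', (Sp i.1 r.1 - Sm i.1 r.1) * v' r.1
        = ∑ r : ℛ, (Sp i.1 r - Sm i.1 r) * v' r := by
      rw [Finset.sum_coe_sort R' (fun r => (Sp i.1 r - Sm i.1 r) * v' r)]
      refine Finset.sum_subset (Finset.subset_univ R') ?_
      intro r _ hr
      rw [hv'zero r hr, mul_zero]
    show 0 < ∑ r : R', (Sp i.1 r.1 - Sm i.1 r.1) * v' r.1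
    rw [heq]
    have := hSv' i.1
    simpa [Matrix.mulVec, dotProduct, Matrix.sub_apply] using this
  · -- row i of Sm restricted is nonzero
    have := i.2
    simp only [hS', Finset.mem_filter, Finset.mem_univ, true_and] at this
    obtain ⟨r, hrR, hrpos⟩ := this
    intro h0
    have := congrFun h0 ⟨r, hrR⟩
    simp only [Pi.zero_apply] at this
    rw [this] at hrpos
    exact lt_irrefl 0 hrpos
  · -- column r of Sm restricted is nonzero
    obtain ⟨hnn, hne⟩ := hcols r.1
    have hex : ∃ i, Sm i r.1 ≠ 0 := by
      by_contra h; push_neg at h; exact hne (funext h)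
    obtain ⟨i, hi⟩ := hex
    have hipos : 0 < Sm i r.1 := lt_of_le_of_ne (hSm i r.1) (Ne.symm hi)
    have hiS : i ∈ S' := by
      simp only [hS', Finset.mem_filter, Finset.mem_univ, true_and]
      exact ⟨r.1, r.2, hipos⟩
    intro h0
    have := congrFun h0 ⟨i, hiS⟩
    simp only [Pi.zero_apply] at this
    rw [this] at hipos
    exact lt_irrefl 0 hipos

/-- Theorem: for an autocatalytic core, the square matrix
`A i j = (Sp - Sm) i (e.symm j)` obtained from any bijection `e : ℛ ≃ 𝒮` is
invertible, its inverse has nonnegative entries, and every column of the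
inverse is semi-positive. -/
theorem autocatalyticCore_inverse_nonneg {𝒮 ℛ : Type*}
    [Fintype 𝒮] [Fintype ℛ] [Nonempty 𝒮] [Nonempty ℛ] [DecidableEq 𝒮]
    (Sm Sp : Matrix 𝒮 ℛ ℝ)
    (hSm : ∀ i r, 0 ≤ Sm i r) (hSp : ∀ i r, 0 ≤ Sp i r)
    (hcore : IsAutocatalyticCore Sm Sp)
    (e : ℛ ≃ 𝒮) (A : Matrix 𝒮 𝒮 ℝ)
    (hA : A = Matrix.of fun i j => (Sp - Sm) i (e.symm j)) :
    IsUnit A ∧ (∀ i j, 0 ≤ A⁻¹ i j) ∧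
    ∀ j : 𝒮, SemiPositive (fun i => A⁻¹ i j) := by
  classical
  have hAw : ∀ u : 𝒮 → ℝ, A.mulVec u = (Sp - Sm).mulVec (fun r => u (e r)) := by
    intro u
    funext i
    rw [hA]
    simp only [Matrix.mulVec, dotProduct, Matrix.of_apply]
    exact (Fintype.sum_equiv e (fun r => (Sp - Sm) i r * u (e r))
      (fun j => (Sp - Sm) i (e.symm j) * u j) (fun r => by simp)).symm
  have hkey : ∀ u : 𝒮 → ℝ, (∀ i, 0 ≤ A.mulVec u i) → ∀ s, 0 ≤ u s := by
    intro u hu s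
    have := key_lemma Sm Sp hSm hcore (fun r => u (e r))
      (fun i => by rw [← hAw]; exact hu i) (e.symm s)
    simpa using this
  have hdet : A.det ≠ 0 := by
    intro h
    obtain ⟨u, hu0, hu⟩ := (Matrix.exists_mulVec_eq_zero_iff).mpr h
    have h1 : ∀ s, 0 ≤ u s := hkey u (by rw [hu]; intro i; simp)
    have h2 : ∀ s, 0 ≤ (-u) s := hkey (-u) (by
      intro i
      rw [Matrix.mulVec_neg, hu]
      simp)
    exact hu0 (funext fun s => le_antisymm (by simpa using h2 s) (h1 s))
  have hunit : IsUnit A := (Matrix.isUnit_iff_isUnit_det A).mpr (isUnit_iff_ne_zero.mpr hdet)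
  have hmul : ∀ j, A.mulVec (fun i => A⁻¹ i j) = fun k => (1 : Matrix 𝒮 𝒮 ℝ) k j := by
    intro j
    funext k
    have hAAinv : A * A⁻¹ = 1 := Matrix.mul_nonsing_inv A (isUnit_iff_ne_zero.mpr hdet)
    calc A.mulVec (fun i => A⁻¹ i j) k = (A * A⁻¹) k j := by
          simp [Matrix.mulVec, dotProduct, Matrix.mul_apply]
      _ = (1 : Matrix 𝒮 𝒮 ℝ) k j := by rw [hAAinv]
  have hinv : ∀ i j, 0 ≤ A⁻¹ i j := by
    intro i j
    refine hkey (fun i => A⁻¹ i j) ?_ i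
    intro k
    rw [hmul j]
    by_cases h : k = j <;> simp [Matrix.one_apply, h]
  refine ⟨hunit, hinv, fun j => ⟨fun i => hinv i j, ?_⟩⟩
  intro h0
  have := congrFun (hmul j) j
  rw [h0] at this
  simp [Matrix.mulVec_zero, Matrix.one_apply] at this
end

section
/- Let S⁻, S⁺ : Matrix 𝒮 ℛ ℝ have nonnegative entries, set 𝕊 = S⁺ − S⁻, and let M ⊆ 𝒮. Then the following are equivalent: (a) there exists a positive flow v : ℛ → ℝ such that for every m ∈ M both (S⁻.mulVec v) m > 0 and (𝕊.mulVec v) m > 0 (i.e., the composite reaction has the form F + mM → nM + W with 0 ≪ m ≪ n on M); (b) there exists a positive flow v : ℛ → ℝ with (𝕊.mulVec v) m > 0 for all m ∈ M, and for every m ∈ M the m-th row of S⁻ is semi-positive (i.e., nonzero). -/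
open Matrix

theorem Positive.dotProduct_pos_iff_ne_zero {ι : Type*} [Fintype ι] {v w : ι → ℝ}
    (hv : Positive v) (hw : ∀ i, 0 ≤ w i) : 0 < w ⬝ᵥ v ↔ w ≠ 0 := by
  rw [dotProduct, Finset.sum_pos_iff_of_nonneg fun i _ => mul_nonneg (hw i) (hv i).le,
    Function.ne_iff]
  simp only [Finset.mem_univ, true_and, mul_pos_iff_of_pos_right (hv _), (hw _).lt_iff_ne',
    Pi.zero_apply]

theorem Positive.dotProduct_pos_iff_semiPositive {ι : Type*} [Fintype ι] {v w : ι → ℝ}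
    (hv : Positive v) (hw : ∀ i, 0 ≤ w i) : 0 < w ⬝ᵥ v ↔ SemiPositive w := by
  rw [hv.dotProduct_pos_iff_ne_zero hw, SemiPositive, and_iff_right hw]

theorem formallyAutocatalytic_iff_general {𝒮 ℛ : Type*}
    [Fintype ℛ]
    (Sm Sp : Matrix 𝒮 ℛ ℝ)
    (hSm : ∀ i r, 0 ≤ Sm i r)
    (M : Set 𝒮) :
    (∃ v : ℛ → ℝ, Positive v ∧
        ∀ m ∈ M, 0 < Sm.mulVec v m ∧ 0 < (Sp - Sm).mulVec v m) ↔
    ((∃ v : ℛ → ℝ, Positive v ∧ ∀ m ∈ M, 0 < (Sp - Sm).mulVec v m) ∧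
      ∀ m ∈ M, SemiPositive (fun r => Sm m r)) := by
  constructor
  · rintro ⟨v, hv, hM⟩
    exact ⟨⟨v, hv, fun m hm => (hM m hm).2⟩,
      fun m hm => (hv.dotProduct_pos_iff_semiPositive (hSm m)).1 (hM m hm).1⟩
  · rintro ⟨⟨v, hv, hM⟩, hrows⟩
    exact ⟨v, hv, fun m hm =>
      ⟨(hv.dotProduct_pos_iff_semiPositive (hSm m)).2 (hrows m hm), hM m hm⟩⟩

/-- Theorem: linear-algebraic characterization of formal autocatalysis in
the species subset `M`: there is a positive flow under which every species
of `M` is both consumed and strictly net produced iff there is a positive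
flow strictly net producing every species of `M` and every `M`-row of the
input matrix is semi-positive. -/
theorem formallyAutocatalytic_iff {𝒮 ℛ : Type*}
    [Fintype 𝒮] [Fintype ℛ] [Nonempty 𝒮] [Nonempty ℛ]
    (Sm Sp : Matrix 𝒮 ℛ ℝ)
    (hSm : ∀ i r, 0 ≤ Sm i r) (hSp : ∀ i r, 0 ≤ Sp i r)
    (M : Set 𝒮) :
    (∃ v : ℛ → ℝ, Positive v ∧
        ∀ m ∈ M, 0 < Sm.mulVec v m ∧ 0 < (Sp - Sm).mulVec v m) ↔
    ((∃ v : ℛ → ℝ, Positive v ∧ ∀ m ∈ M, 0 < (Sp - Sm).mulVec v m) ∧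
      ∀ m ∈ M, SemiPositive (fun r => Sm m r)) :=
  formallyAutocatalytic_iff_general Sm Sp hSm M
end

section
/- Let 𝒮 be a finite type, C a subset of 𝒮, ℛ a finite type, e : ℛ ≃ C a bijection, and 𝕊 : Matrix 𝒮 ℛ ℝ a matrix such that the square submatrix A : Matrix C C ℝ, A c c' = 𝕊 c (e.symm c'), is invertible. Let M : Matrix 𝒮 C ℝ be M = (𝕊.submatrix id e.symm) * A⁻¹. Then the image, under the coordinate-restriction map (𝒮 → ℝ) → (C → ℝ), of the convex cone generated by the columns of M equals the nonnegative orthant {u : C → ℝ | u c ≥ 0 for all c ∈ C}. -/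
/-!
The columns of `M = 𝕊_{·,C} · A⁻¹` restricted to the core rows form `A · A⁻¹ = 1`, so restricting
`M a` to the core species returns `a` itself. Hence the restricted cone is exactly the set of
nonnegative coefficient vectors.
-/

open Matrix

namespace Matrix

variable {m n R : Type*} [Fintype n] [DecidableEq n]

theorem mulVec_comp_eq_self_of_submatrix_eq_one [NonAssocSemiring R] {M : Matrix m n R}
    {f : n → m} (hM : M.submatrix f id = 1) (a : n → R) : (M *ᵥ a) ∘ f = a := by
  calc (M *ᵥ a) ∘ f = M.submatrix f id *ᵥ a := (submatrix_mulVec_equiv M a f (Equiv.refl n)).symm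
    _ = a := by rw [hM, one_mulVec]

theorem image_comp_nonnegCone_eq_nonneg [Semiring R] [PartialOrder R] {M : Matrix m n R}
    {f : n → m} (hM : M.submatrix f id = 1) :
    (fun w : m → R => w ∘ f) '' {w | ∃ a : n → R, (∀ i, 0 ≤ a i) ∧ w = M *ᵥ a}
      = {u | ∀ i, 0 ≤ u i} := by
  ext u
  constructor
  · rintro ⟨_, ⟨a, ha, rfl⟩, rfl⟩
    simpa only [Set.mem_ofPred_eq, mulVec_comp_eq_self_of_submatrix_eq_one hM] using ha
  · intro hu
    exact ⟨M *ᵥ u, ⟨u, hu, rfl⟩, mulVec_comp_eq_self_of_submatrix_eq_one hM u⟩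

end Matrix

theorem speciesProductiveCone_restrict_core_general {𝒮 ℛ : Type*}
    [DecidableEq 𝒮]
    (C : Finset 𝒮) (e : ℛ ≃ C) (𝕊 : Matrix 𝒮 ℛ ℝ)
    (A : Matrix C C ℝ) (hA : A = Matrix.of fun c c' => 𝕊 c.1 (e.symm c'))
    (hAunit : IsUnit A)
    (M : Matrix 𝒮 C ℝ)
    (hM : M = (𝕊.submatrix id (fun c : C => (e.symm c : ℛ))) * A⁻¹) :
    (fun w : 𝒮 → ℝ => fun c : C => w c.1) ''
        {w : 𝒮 → ℝ | ∃ a : C → ℝ, (∀ c, 0 ≤ a c) ∧ w = M.mulVec a}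
      = {u : C → ℝ | ∀ c, 0 ≤ u c} := by
  have hcore : M.submatrix (Subtype.val : C → 𝒮) id = 1 := by
    rw [hM, submatrix_mul _ _ _ _ _ Function.bijective_id, submatrix_id_id]
    have hrows : (𝕊.submatrix id fun c : C => e.symm c).submatrix (Subtype.val : C → 𝒮) id = A := by
      rw [hA]; rfl
    rw [hrows, mul_nonsing_inv A ((isUnit_iff_isUnit_det A).mp hAunit)]
  exact image_comp_nonnegCone_eq_nonneg hcore

/-- Theorem: the restriction of the species-productive cone of a minimal
autocatalytic subnetwork to its core species `C` is the nonnegative orthant: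
the image, under coordinate restriction to `C`, of the convex cone generated
by the columns of `M = 𝕊 · (𝕊_C)⁻¹` is `{u : C → ℝ | ∀ c, 0 ≤ u c}`. -/
theorem speciesProductiveCone_restrict_core {𝒮 ℛ : Type*}
    [Fintype 𝒮] [DecidableEq 𝒮] [Fintype ℛ]
    (C : Finset 𝒮) (e : ℛ ≃ C) (𝕊 : Matrix 𝒮 ℛ ℝ)
    (A : Matrix C C ℝ) (hA : A = Matrix.of fun c c' => 𝕊 c.1 (e.symm c'))
    (hAunit : IsUnit A)
    (M : Matrix 𝒮 C ℝ)
    (hM : M = (𝕊.submatrix id (fun c : C => (e.symm c : ℛ))) * A⁻¹) :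
    (fun w : 𝒮 → ℝ => fun c : C => w c.1) ''
        {w : 𝒮 → ℝ | ∃ a : C → ℝ, (∀ c, 0 ≤ a c) ∧ w = M.mulVec a}
      = {u : C → ℝ | ∀ c, 0 ≤ u c} :=
  speciesProductiveCone_restrict_core_general C e 𝕊 A hA hAunit M hM
end

section
/- Let 𝕊 : Matrix 𝒮 ℛ ℝ with 𝒮, ℛ finite types, let C ⊆ 𝒮 be nonempty, and let x : 𝒮 → ℝ satisfy x i > 0 for all i and Matrix.vecMul x 𝕊 = 0 (a positive conservation law). If there exists a positive flow v : ℛ → ℝ with (𝕊.mulVec v) c > 0 for all c ∈ C, then there exist i ∈ 𝒮 with i ∉ C and r ∈ ℛ such that 𝕊 i r < 0. -/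
/-!
Pairing with the conservation law gives `x ⬝ᵥ 𝕊 *ᵥ v = (x ᵥ* 𝕊) ⬝ᵥ v = 0`. Since `x > 0` and the core
species are strictly produced, some species `i` must be strictly consumed, `(𝕊 *ᵥ v) i < 0`; it is not
core, and as `v > 0` its row of `𝕊` has a negative entry.
-/

open Matrix

section

variable {ι R : Type*} [Fintype ι] [Ring R] [LinearOrder R] [IsStrictOrderedRing R]

theorem exists_neg_of_dotProduct_eq_zero {x y : ι → R} (hx : ∀ i, 0 < x i)
    (hxy : x ⬝ᵥ y = 0) {c : ι} (hc : 0 < y c) : ∃ i, y i < 0 := by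
  by_contra! hy
  have hpos : 0 < x ⬝ᵥ y :=
    Finset.sum_pos' (fun i _ => mul_nonneg (hx i).le (hy i))
      ⟨c, Finset.mem_univ c, mul_pos (hx c) hc⟩
  exact hpos.ne' hxy

theorem exists_neg_entry_of_mulVec_neg {κ : Type*} {A : Matrix κ ι R} {v : ι → R}
    (hv : ∀ r, 0 ≤ v r) {i : κ} (hi : (A *ᵥ v) i < 0) : ∃ r, A i r < 0 := by
  by_contra! hA
  exact hi.not_ge (Finset.sum_nonneg fun r _ => mul_nonneg (hA r) (hv r))

end

/-- Theorem: if a subnetwork with stoichiometric matrix `𝕊` admits a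
positive conservation law `x` and there is a strictly positive flow under
which all core species (the set `C`) are strictly produced, then some
non-core species is net consumed by some reaction (the union of the food
set and the non-core member set is nonempty). -/
theorem positiveConservation_nonCore_consumed {𝒮 ℛ : Type*}
    [Fintype 𝒮] [Fintype ℛ]
    (𝕊 : Matrix 𝒮 ℛ ℝ) (C : Set 𝒮) (hC : C.Nonempty)
    (x : 𝒮 → ℝ) (hx : ∀ i, 0 < x i) (hcons : Matrix.vecMul x 𝕊 = 0)
    (hflow : ∃ v : ℛ → ℝ, (∀ r, 0 < v r) ∧ ∀ c ∈ C, 0 < 𝕊.mulVec v c) :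
    ∃ i : 𝒮, i ∉ C ∧ ∃ r : ℛ, 𝕊 i r < 0 := by
  obtain ⟨v, hv, hcore⟩ := hflow
  obtain ⟨c, hc⟩ := hC
  have horth : x ⬝ᵥ (𝕊 *ᵥ v) = 0 := by
    rw [dotProduct_mulVec, hcons, zero_dotProduct]
  obtain ⟨i, hi⟩ := exists_neg_of_dotProduct_eq_zero hx horth (hcore c hc)
  have hiC : i ∉ C := fun hiC => (hcore i hiC).not_gt hi
  exact ⟨i, hiC, exists_neg_entry_of_mulVec_neg (fun r => (hv r).le) hi⟩
end

section
/- Let 𝒮 be a finite type with a distinguished element f, put C = {i : 𝒮 // i ≠ f}, let ℛ be a finite type with a bijection e : ℛ ≃ C, and let 𝕊 : Matrix 𝒮 ℛ ℝ be such that the square submatrix A : Matrix C C ℝ, A c c' = 𝕊 c.val (e.symm c'), is invertible. Suppose x : 𝒮 → ℝ satisfies x i > 0 for all i and Matrix.vecMul x 𝕊 = 0. Then the convex cone in (𝒮 → ℝ) generated by the columns of the matrix M = (𝕊.submatrix id e.symm) * A⁻¹ equals the set {w : 𝒮 → ℝ | w i ≥ 0 for every i ≠ f, and ∑ i, x i *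 w i = 0}. -/
open Matrix

/-!
Normalising by the core block turns the core rows of `M = 𝕊 𝕊_C⁻¹` into the identity, so the
core coordinates of `M a` are the coefficients `a` themselves, and `x M = 0` because `x 𝕊 = 0`.
Every `M a` with `a ≥ 0` is therefore non-negative on the core and orthogonal to `x`.
Conversely, such a `w` agrees with `M (w|_C)` on the core, and since both are orthogonal to `x`
and `x f ≠ 0`, they also agree at the food species `f`.
-/

theorem eq_of_dotProduct_eq_of_forall_ne {ι R : Type*} [Fintype ι] [Ring R] [NoZeroDivisors R]
    {x v w : ι → R} {f : ι} (hxf : x f ≠ 0) (hvw : ∀ i, i ≠ f → v i = w i)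
    (hdot : x ⬝ᵥ v = x ⬝ᵥ w) : v = w := by
  have hdiff : x ⬝ᵥ (v - w) = x f * (v - w) f :=
    Finset.sum_eq_single f (fun i _ hi => by simp [hvw i hi]) (by simp)
  have hf : (v - w) f = 0 := by
    rw [dotProduct_sub, hdot, sub_self] at hdiff
    exact (mul_eq_zero.mp hdiff.symm).resolve_left hxf
  funext i
  by_cases hi : i = f
  · exact sub_eq_zero.mp (hi ▸ hf)
  · exact hvw i hi

namespace Matrix

variable {ι κ R : Type*} [Fintype κ]

theorem mulVec_apply_of_submatrix_id_eq_one [NonAssocSemiring R] [DecidableEq κ]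
    {M : Matrix ι κ R} {g : κ → ι} (hM : M.submatrix g id = 1) (a : κ → R) (c : κ) :
    (M *ᵥ a) (g c) = a c :=
  calc (M *ᵥ a) (g c) = (M.submatrix g id *ᵥ a) c := rfl
    _ = a c := by rw [hM, one_mulVec]

theorem setOf_nonneg_mulVec_eq_of_submatrix_val_eq_one [Fintype ι] [DecidableEq ι] [Ring R]
    [LE R] [NoZeroDivisors R] {f : ι} {M : Matrix ι {i // i ≠ f} R} {x : ι → R}
    (hM : M.submatrix (Subtype.val : {i // i ≠ f} → ι) id = 1) (hxM : x ᵥ* M = 0) (hxf : x f ≠ 0) :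
    {w | ∃ a : {i // i ≠ f} → R, (∀ c, 0 ≤ a c) ∧ w = M *ᵥ a}
      = {w | (∀ i, i ≠ f → 0 ≤ w i) ∧ x ⬝ᵥ w = 0} := by
  have hcore := mulVec_apply_of_submatrix_id_eq_one hM
  have horth (a) : x ⬝ᵥ (M *ᵥ a) = 0 := by rw [dotProduct_mulVec, hxM, zero_dotProduct]
  ext w
  constructor
  · rintro ⟨a, ha, rfl⟩
    exact ⟨fun i hi => (hcore a ⟨i, hi⟩).symm ▸ ha _, horth a⟩
  · rintro ⟨hw, hxw⟩
    refine ⟨fun c => w c, fun c => hw c c.2, eq_of_dotProduct_eq_of_forall_ne hxf ?_ ?_⟩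
    · exact fun i hi => (hcore (fun c => w c) ⟨i, hi⟩).symm
    · rw [hxw, horth]

end Matrix

theorem speciesProductiveCone_eq_partitionProductiveCone_general {𝒮 ℛ : Type*}
    [Fintype 𝒮] [DecidableEq 𝒮]
    (f : 𝒮) (e : ℛ ≃ {i : 𝒮 // i ≠ f}) (𝕊 : Matrix 𝒮 ℛ ℝ)
    (A : Matrix {i : 𝒮 // i ≠ f} {i : 𝒮 // i ≠ f} ℝ)
    (hA : A = Matrix.of fun c c' => 𝕊 c.1 (e.symm c'))
    (hAunit : IsUnit A)
    (x : 𝒮 → ℝ) (hx : ∀ i, 0 < x i) (hcons : Matrix.vecMul x 𝕊 = 0)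
    (M : Matrix 𝒮 {i : 𝒮 // i ≠ f} ℝ)
    (hM : M = (𝕊.submatrix id (fun c : {i : 𝒮 // i ≠ f} => (e.symm c : ℛ))) * A⁻¹) :
    {w : 𝒮 → ℝ | ∃ a : {i : 𝒮 // i ≠ f} → ℝ, (∀ c, 0 ≤ a c) ∧ w = M.mulVec a}
      = {w : 𝒮 → ℝ | (∀ i : 𝒮, i ≠ f → 0 ≤ w i) ∧ ∑ i : 𝒮, x i * w i = 0} := by
  have hcore : M.submatrix (Subtype.val : {i // i ≠ f} → 𝒮) id = 1 := by
    rw [hM, submatrix_mul _ _ _ id _ Function.bijective_id, submatrix_id_id]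
    exact hA ▸ mul_nonsing_inv A ((isUnit_iff_isUnit_det A).mp hAunit)
  have hxM : x ᵥ* M = 0 := by
    rw [hM, ← vecMul_vecMul, ← Equiv.coe_refl, submatrix_vecMul_equiv, Equiv.refl_symm,
      Equiv.coe_refl, Function.comp_id, hcons, Pi.zero_comp, zero_vecMul]
  exact setOf_nonneg_mulVec_eq_of_submatrix_val_eq_one hcore hxM (hx f).ne'

/-- Theorem: for a minimal autocatalytic subnetwork with exactly one more
species (`f`) than its core set `C = {i // i ≠ f}`, and with a positive
conservation law `x`, the species-productive cone (the convex cone generated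
by the columns of `M = 𝕊 · (𝕊_C)⁻¹`) equals the partition-productive cone
`{w | w i ≥ 0 for all i ≠ f, and ∑ i, x i * w i = 0}`. -/
theorem speciesProductiveCone_eq_partitionProductiveCone {𝒮 ℛ : Type*}
    [Fintype 𝒮] [DecidableEq 𝒮] [Fintype ℛ]
    (f : 𝒮) (e : ℛ ≃ {i : 𝒮 // i ≠ f}) (𝕊 : Matrix 𝒮 ℛ ℝ)
    (A : Matrix {i : 𝒮 // i ≠ f} {i : 𝒮 // i ≠ f} ℝ)
    (hA : A = Matrix.of fun c c' => 𝕊 c.1 (e.symm c'))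
    (hAunit : IsUnit A)
    (x : 𝒮 → ℝ) (hx : ∀ i, 0 < x i) (hcons : Matrix.vecMul x 𝕊 = 0)
    (M : Matrix 𝒮 {i : 𝒮 // i ≠ f} ℝ)
    (hM : M = (𝕊.submatrix id (fun c : {i : 𝒮 // i ≠ f} => (e.symm c : ℛ))) * A⁻¹) :
    {w : 𝒮 → ℝ | ∃ a : {i : 𝒮 // i ≠ f} → ℝ, (∀ c, 0 ≤ a c) ∧ w = M.mulVec a}
      = {w : 𝒮 → ℝ | (∀ i : 𝒮, i ≠ f → 0 ≤ w i) ∧ ∑ i : 𝒮, x i * w i = 0} :=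
  speciesProductiveCone_eq_partitionProductiveCone_general f e 𝕊 A hA hAunit x hx hcons M hM
end

section
/- Let 𝕊 : Matrix 𝒮 ℛ ℝ with 𝒮, ℛ finite. For a subset ℛ' ⊆ ℛ and i ∈ 𝒮, call i a food species of ℛ' if the restricted row (𝕊 i r)_{r ∈ ℛ'} is nonzero and all its entries are ≤ 0, and a waste species of ℛ' if that restricted row is nonzero and all its entries are ≥ 0. Let ℛ_A, ℛ_B ⊆ ℛ with core sets C_A, C_B ⊆ 𝒮 and food sets F_A, F_B. Assume: every i ∈ 𝒮 whose restricted row over ℛ_A is nonzero is a food species, a waste species, or an element of C_A (empty non-core member set), and similarly for B; and F_A ≠ F_B. Define region_A = {𝕊.mulVec v | v : ℛ → ℝ, v r > 0 for r ∈ ℛ_A, v r = 0 for r ∉ ℛ_A, and (𝕊.mulVec v) c > 0 for all c ∈ C_A}, and region_B analogously. Then region_A ∩ region_B = ∅. -/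
/-!
A positive flow supported on a subnetwork consumes exactly its food species: a food row has
only nonpositive entries, one of them negative, so its output is negative; a waste row gives a
nonnegative output, a core species is produced, and a species outside the subnetwork is
untouched. Hence any point `w` of the productive region determines the food set as
`{i | w i < 0}`, and a common point of two regions forces equal food sets.
-/

open Matrix

def productiveRegion {𝒮 ℛ : Type*} [Fintype ℛ] (𝕊 : Matrix 𝒮 ℛ ℝ) (R : Set ℛ) (C : Set 𝒮) :
    Set (𝒮 → ℝ) :=
  {w | ∃ v : ℛ → ℝ, (∀ r ∈ R, 0 < v r) ∧ (∀ r ∉ R, v r = 0) ∧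
    (∀ c ∈ C, 0 < 𝕊.mulVec v c) ∧ w = 𝕊.mulVec v}

section SupportedFlow

variable {𝒮 ℛ : Type*} [Fintype ℛ] (𝕊 : Matrix 𝒮 ℛ ℝ) {R : Set ℛ} {v : ℛ → ℝ} (i : 𝒮)

lemma mulVec_apply_eq_zero_of_row_eq_zero (hsupp : ∀ r ∉ R, v r = 0)
    (hrow : ∀ r ∈ R, 𝕊 i r = 0) : (𝕊 *ᵥ v) i = 0 := by
  rw [mulVec_apply_eq_sum]
  refine Finset.sum_eq_zero fun r _ => ?_
  by_cases hr : r ∈ R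
  · rw [hrow r hr, zero_mul]
  · rw [hsupp r hr, mul_zero]

lemma mulVec_apply_nonneg_of_row_nonneg (hsupp : ∀ r ∉ R, v r = 0) (hnonneg : ∀ r ∈ R, 0 ≤ v r)
    (hrow : ∀ r ∈ R, 0 ≤ 𝕊 i r) : 0 ≤ (𝕊 *ᵥ v) i := by
  rw [mulVec_apply_eq_sum]
  refine Finset.sum_nonneg fun r _ => ?_
  by_cases hr : r ∈ R
  · exact mul_nonneg (hrow r hr) (hnonneg r hr)
  · rw [hsupp r hr, mul_zero]

lemma mulVec_apply_neg_of_row_nonpos (hsupp : ∀ r ∉ R, v r = 0) (hpos : ∀ r ∈ R, 0 < v r)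
    (hne : ∃ r ∈ R, 𝕊 i r ≠ 0) (hrow : ∀ r ∈ R, 𝕊 i r ≤ 0) : (𝕊 *ᵥ v) i < 0 := by
  obtain ⟨r₀, hr₀, hne₀⟩ := hne
  rw [mulVec_apply_eq_sum]
  refine Finset.sum_neg' (fun r _ => ?_) ⟨r₀, Finset.mem_univ _, ?_⟩
  · by_cases hr : r ∈ R
    · exact mul_nonpos_of_nonpos_of_nonneg (hrow r hr) (hpos r hr).le
    · rw [hsupp r hr, mul_zero]
  · exact mul_neg_of_neg_of_pos ((hrow r₀ hr₀).lt_of_ne hne₀) (hpos r₀ hr₀)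

end SupportedFlow

lemma foodSet_eq_setOf_neg_of_mem_productiveRegion {𝒮 ℛ : Type*} [Fintype ℛ]
    {𝕊 : Matrix 𝒮 ℛ ℝ} {R : Set ℛ} {C F : Set 𝒮}
    (hF : ∀ i : 𝒮, i ∈ F ↔ ((∃ r ∈ R, 𝕊 i r ≠ 0) ∧ ∀ r ∈ R, 𝕊 i r ≤ 0))
    (hmem : ∀ i : 𝒮, (∃ r ∈ R, 𝕊 i r ≠ 0) →
      (∀ r ∈ R, 𝕊 i r ≤ 0) ∨ (∀ r ∈ R, 0 ≤ 𝕊 i r) ∨ i ∈ C)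
    {w : 𝒮 → ℝ} (hw : w ∈ productiveRegion 𝕊 R C) : F = {i | w i < 0} := by
  obtain ⟨v, hpos, hsupp, hcore, rfl⟩ := hw
  ext i
  refine ⟨fun hi => mulVec_apply_neg_of_row_nonpos 𝕊 i hsupp hpos ((hF i).1 hi).1 ((hF i).1 hi).2,
    fun hneg => ?_⟩
  by_cases hne : ∃ r ∈ R, 𝕊 i r ≠ 0
  · rcases hmem i hne with hfood | hwaste | hi
    · exact (hF i).2 ⟨hne, hfood⟩
    · exact absurd hneg (mulVec_apply_nonneg_of_row_nonneg 𝕊 i hsupp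
        (fun r hr => (hpos r hr).le) hwaste).not_gt
    · exact absurd hneg (hcore i hi).not_gt
  · push Not at hne
    exact absurd hneg (mulVec_apply_eq_zero_of_row_eq_zero 𝕊 i hsupp hne).not_lt

theorem distinct_food_sets_disjoint_productive_regions_general {𝒮 ℛ : Type*}
    [Fintype ℛ]
    (𝕊 : Matrix 𝒮 ℛ ℝ)
    (RA RB : Set ℛ) (CA CB FA FB : Set 𝒮)
    -- `FA` is the food set of the subnetwork `RA`:
    (hFA : ∀ i : 𝒮, i ∈ FA ↔
      ((∃ r ∈ RA, 𝕊 i r ≠ 0) ∧ ∀ r ∈ RA, 𝕊 i r ≤ 0))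
    -- `FB` is the food set of the subnetwork `RB`:
    (hFB : ∀ i : 𝒮, i ∈ FB ↔
      ((∃ r ∈ RB, 𝕊 i r ≠ 0) ∧ ∀ r ∈ RB, 𝕊 i r ≤ 0))
    -- empty non-core member set for `A`: every species with nonzero
    -- restricted row is a food species, a waste species, or a core species:
    (hmemA : ∀ i : 𝒮, (∃ r ∈ RA, 𝕊 i r ≠ 0) →
      (∀ r ∈ RA, 𝕊 i r ≤ 0) ∨ (∀ r ∈ RA, 0 ≤ 𝕊 i r) ∨ i ∈ CA)
    (hmemB : ∀ i : 𝒮, (∃ r ∈ RB, 𝕊 i r ≠ 0) →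
      (∀ r ∈ RB, 𝕊 i r ≤ 0) ∨ (∀ r ∈ RB, 0 ≤ 𝕊 i r) ∨ i ∈ CB)
    (hFne : FA ≠ FB) :
    {w : 𝒮 → ℝ | ∃ v : ℛ → ℝ, (∀ r ∈ RA, 0 < v r) ∧ (∀ r ∉ RA, v r = 0) ∧
        (∀ c ∈ CA, 0 < 𝕊.mulVec v c) ∧ w = 𝕊.mulVec v} ∩
      {w : 𝒮 → ℝ | ∃ v : ℛ → ℝ, (∀ r ∈ RB, 0 < v r) ∧ (∀ r ∉ RB, v r = 0) ∧
        (∀ c ∈ CB, 0 < 𝕊.mulVec v c) ∧ w = 𝕊.mulVec v} = ∅ := by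
  change productiveRegion 𝕊 RA CA ∩ productiveRegion 𝕊 RB CB = ∅
  refine Set.eq_empty_of_forall_notMem fun w ⟨hwA, hwB⟩ => hFne ?_
  rw [foodSet_eq_setOf_neg_of_mem_productiveRegion hFA hmemA hwA,
    foodSet_eq_setOf_neg_of_mem_productiveRegion hFB hmemB hwB]

/-- Theorem: two autocatalytic subnetworks (with reaction sets `RA`, `RB`,
core sets `CA`, `CB`, and food sets `FA`, `FB`) whose non-core member sets
are empty and whose food sets differ have disjoint species-productive
regions. -/
theorem distinct_food_sets_disjoint_productive_regions {𝒮 ℛ : Type*}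
    [Fintype 𝒮] [Fintype ℛ]
    (𝕊 : Matrix 𝒮 ℛ ℝ)
    (RA RB : Set ℛ) (CA CB FA FB : Set 𝒮)
    -- `FA` is the food set of the subnetwork `RA`:
    (hFA : ∀ i : 𝒮, i ∈ FA ↔
      ((∃ r ∈ RA, 𝕊 i r ≠ 0) ∧ ∀ r ∈ RA, 𝕊 i r ≤ 0))
    -- `FB` is the food set of the subnetwork `RB`:
    (hFB : ∀ i : 𝒮, i ∈ FB ↔
      ((∃ r ∈ RB, 𝕊 i r ≠ 0) ∧ ∀ r ∈ RB, 𝕊 i r ≤ 0))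
    -- empty non-core member set for `A`: every species with nonzero
    -- restricted row is a food species, a waste species, or a core species:
    (hmemA : ∀ i : 𝒮, (∃ r ∈ RA, 𝕊 i r ≠ 0) →
      (∀ r ∈ RA, 𝕊 i r ≤ 0) ∨ (∀ r ∈ RA, 0 ≤ 𝕊 i r) ∨ i ∈ CA)
    (hmemB : ∀ i : 𝒮, (∃ r ∈ RB, 𝕊 i r ≠ 0) →
      (∀ r ∈ RB, 𝕊 i r ≤ 0) ∨ (∀ r ∈ RB, 0 ≤ 𝕊 i r) ∨ i ∈ CB)
    (hFne : FA ≠ FB) :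
    {w : 𝒮 → ℝ | ∃ v : ℛ → ℝ, (∀ r ∈ RA, 0 < v r) ∧ (∀ r ∉ RA, v r = 0) ∧
        (∀ c ∈ CA, 0 < 𝕊.mulVec v c) ∧ w = 𝕊.mulVec v} ∩
      {w : 𝒮 → ℝ | ∃ v : ℛ → ℝ, (∀ r ∈ RB, 0 < v r) ∧ (∀ r ∉ RB, v r = 0) ∧
        (∀ c ∈ CB, 0 < 𝕊.mulVec v c) ∧ w = 𝕊.mulVec v} = ∅ :=
  distinct_food_sets_disjoint_productive_regions_general 𝕊 RA RB CA CB FA FB hFA hFB hmemA hmemB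
    hFne
end

section
/- Let L ≥ 2 be a natural number and, for 1 ≤ k ≤ L, let e_k denote the k-th standard basis vector of ℝ^L (coordinates indexed by the species 1, …, L). Then the ℝ-linear span of the set of vectors {e_c + e_d − e_a − e_b | 1 ≤ a, b, c, d ≤ L, a + b = c + d} ∪ {e_c + e_d − e_a | 1 ≤ a, c, d ≤ L, c + d = a} equals the hyperplane {x : Fin L → ℝ | ∑_{n=1}^{L} n · x_n = 0}; in particular this span has dimension L − 1. -/
/-- The columns of the stoichiometric matrix of the complete 1-constituent
CCRN of length `L` and order two: the vectors `e_c + e_d − e_a − e_b` for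
reactions `ā + b̄ → c̄ + d̄` with `a + b = c + d`, together with the vectors
`e_c + e_d − e_a` for reactions `ā → c̄ + d̄` with `c + d = a`.  Species `n`
(for `1 ≤ n ≤ L`) is indexed by the element of `Fin L` with value `n − 1`. -/
def stoichVectors (L : ℕ) : Set (Fin L → ℝ) :=
  {w : Fin L → ℝ | ∃ a b c d : Fin L,
      ((a : ℕ) + 1) + ((b : ℕ) + 1) = ((c : ℕ) + 1) + ((d : ℕ) + 1) ∧
      w = Pi.single c 1 + Pi.single d 1 - Pi.single a 1 - Pi.single b 1} ∪
  {w : Fin L → ℝ | ∃ a c d : Fin L,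
      ((c : ℕ) + 1) + ((d : ℕ) + 1) = (a : ℕ) + 1 ∧
      w = Pi.single c 1 + Pi.single d 1 - Pi.single a 1}

/-!
Every reaction conserves the total mass `∑ n xₙ`, so the span lies in the hyperplane. Conversely,
the reactions `(n+1)‾ → n̄ + 1̄` telescope to put `eₙ − n e₁` in the span, and every `x` on the
hyperplane equals `∑ₙ xₙ (eₙ − n e₁)` because the `e₁`-coefficients add up to `−∑ n xₙ = 0`. The
dimension count is rank–nullity for a nonzero functional.
-/

open Submodule LinearMap

theorem Fintype.ker_linearCombination_le_span {R ι : Type*} [CommRing R] [Fintype ι]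
    [DecidableEq ι] (w : ι → R) (i₀ : ι) :
    ker (Fintype.linearCombination R w) ≤
      span R (Set.range fun i => Pi.single i 1 - w i • Pi.single i₀ (1 : R)) := by
  intro x hx
  have hx' : ∑ i, x i * w i = 0 := by rwa [mem_ker, Fintype.linearCombination_apply] at hx
  have hdecomp : x = ∑ i, x i • (Pi.single i 1 - w i • Pi.single i₀ (1 : R)) := by
    simp only [smul_sub, Finset.sum_sub_distrib, smul_smul, ← Finset.sum_smul]
    rw [hx', zero_smul, sub_zero]
    simpa using ((Pi.basisFun R ι).sum_repr x).symm
  rw [hdecomp]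
  exact sum_mem fun i _ => smul_mem _ _ (subset_span ⟨i, rfl⟩)

/-- The positive conservation law `(1, 2, …, L)`. -/
noncomputable def massFunctional (L : ℕ) : Module.Dual ℝ (Fin L → ℝ) :=
  Fintype.linearCombination ℝ fun n : Fin L => ((n : ℕ) : ℝ) + 1

theorem massFunctional_apply (L : ℕ) (x : Fin L → ℝ) :
    massFunctional L x = ∑ n : Fin L, ((n : ℕ) + 1 : ℝ) * x n := by
  simp only [massFunctional, Fintype.linearCombination_apply, smul_eq_mul, mul_comm]

theorem massFunctional_single (L : ℕ) (a : Fin L) :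
    massFunctional L (Pi.single a 1) = (a : ℕ) + 1 := by
  simp [massFunctional]

theorem stoichVectors_subset_ker (L : ℕ) : stoichVectors L ⊆ ker (massFunctional L) := by
  rintro w (⟨a, b, c, d, h, rfl⟩ | ⟨a, c, d, h, rfl⟩) <;>
  · have h' := congrArg (Nat.cast : ℕ → ℝ) h
    push_cast at h'
    simp only [SetLike.mem_coe, mem_ker, map_add, map_sub, massFunctional_single]
    linarith

theorem single_sub_smul_single_zero_mem_span (L : ℕ) (i : Fin (L + 1)) :
    Pi.single i 1 - ((i : ℕ) + 1 : ℝ) • Pi.single 0 1 ∈ span ℝ (stoichVectors (L + 1)) := by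
  induction i using Fin.induction with
  | zero => simp
  | succ i ih =>
    have hdecay : Pi.single i.castSucc 1 + Pi.single 0 1 - Pi.single i.succ 1 ∈
        stoichVectors (L + 1) :=
      Or.inr ⟨i.succ, i.castSucc, 0, by simp, rfl⟩
    convert sub_mem ih (subset_span hdecay) using 1
    simp only [Fin.val_succ, Fin.val_castSucc]
    push_cast
    module

theorem span_stoichVectors (L : ℕ) : span ℝ (stoichVectors L) = ker (massFunctional L) := by
  refine le_antisymm (span_le.2 (stoichVectors_subset_ker L)) ?_
  cases L with
  | zero => exact fun x _ => Subsingleton.elim x 0 ▸ zero_mem _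
  | succ L =>
    refine (Fintype.ker_linearCombination_le_span _ 0).trans (span_le.2 ?_)
    rintro _ ⟨i, rfl⟩
    exact single_sub_smul_single_zero_mem_span L i

theorem finrank_ker_massFunctional (L : ℕ) :
    Module.finrank ℝ (ker (massFunctional L)) = L - 1 := by
  cases L with
  | zero => exact Module.finrank_zero_of_subsingleton
  | succ L =>
    have hne : massFunctional (L + 1) ≠ 0 := fun h => by
      simpa [h] using massFunctional_single (L + 1) 0
    have hrank := (massFunctional (L + 1)).finrank_ker_add_one_of_ne_zero hne
    simp only [Module.finrank_fin_fun] at hrank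
    omega

theorem stoichiometricSubspace_eq_hyperplane_general (L : ℕ) :
    (Submodule.span ℝ (stoichVectors L) : Set (Fin L → ℝ))
        = {x : Fin L → ℝ | ∑ n : Fin L, ((n : ℕ) + 1 : ℝ) * x n = 0} ∧
      Module.finrank ℝ (Submodule.span ℝ (stoichVectors L)) = L - 1 := by
  rw [span_stoichVectors]
  refine ⟨Set.ext fun x => ?_, finrank_ker_massFunctional L⟩
  simp [massFunctional_apply]

/-- Theorem: the stoichiometric subspace of the complete 1-constituent CCRN
of length `L ≥ 2` and order two is exactly the hyperplane orthogonal to the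
conservation law `(1, 2, …, L)`; in particular it has dimension `L − 1`. -/
theorem stoichiometricSubspace_eq_hyperplane (L : ℕ) (hL : 2 ≤ L) :
    (Submodule.span ℝ (stoichVectors L) : Set (Fin L → ℝ))
        = {x : Fin L → ℝ | ∑ n : Fin L, ((n : ℕ) + 1 : ℝ) * x n = 0} ∧
      Module.finrank ℝ (Submodule.span ℝ (stoichVectors L)) = L - 1 :=
  stoichiometricSubspace_eq_hyperplane_general L
end

section
/- Let L, i, j, ℓ be natural numbers with 1 ≤ j < i ≤ L, 2i − j ≤ L, i − j < ℓ ≤ L, ℓ ≠ i, and ℓ ≠ 2i − j. Define input and output matrices S⁻, S⁺ : Matrix (Fin L ≃ species {1,…,L}) (Fin 2) ℝ for the two reactions R₁ : ī + (j+ℓ−i)‾ → j̄ + ℓ̄ and R₂ : j̄ + (2i−j)‾ → 2ī, i.e., S⁻ n 0 = [n = i] + [n = j+ℓ−i], S⁻ n 1 = [n = j] + [n = 2i−j], S⁺ n 0 = [n = j] + [n = ℓ], S⁺ n 1 = 2·[n = i] (Iverson brackets). Then this two-reaction subnetwork is exclusively autocatalytic in the core set {ī, j̄}: (1) there exists v :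 Fin 2 → ℝ with v 0 > 0, v 1 > 0, ((S⁺ − S⁻).mulVec v) i > 0 and ((S⁺ − S⁻).mulVec v) j > 0; (2) the rows i and j of S⁻ are each nonzero; (3) for each r ∈ Fin 2, S⁻ i r + S⁻ j r > 0 (each reaction consumes a core species). -/
open Matrix

/-- Theorem: the explicit two-reaction family `MAS₁` of the complete
1-constituent CCRN, with reactions
`R₁ : ī + (j+ℓ−i)‾ → j̄ + ℓ̄` and `R₂ : j̄ + (2i−j)‾ → 2ī`,
is exclusively autocatalytic in the core set `{ī, j̄}`: (1) there is a
strictly positive flow under which both core species are strictly net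
produced; (2) the rows `i` and `j` of the input matrix are nonzero (each
core species is consumed); (3) each reaction consumes some core species. -/
theorem MAS1_exclusively_autocatalytic (L i j ℓ : ℕ)
    (hj : 1 ≤ j) (hji : j < i) (hiL : i ≤ L)
    (h2ij : 2 * i - j ≤ L)
    (hℓ1 : i - j < ℓ) (hℓL : ℓ ≤ L) (hℓi : ℓ ≠ i) (hℓ2 : ℓ ≠ 2 * i - j)
    (Sm Sp : Matrix ℕ (Fin 2) ℝ)
    (hSm0 : ∀ n : ℕ, Sm n 0 =
      (if n = i then 1 else 0) + (if n = j + ℓ - i then 1 else 0))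
    (hSm1 : ∀ n : ℕ, Sm n 1 =
      (if n = j then 1 else 0) + (if n = 2 * i - j then 1 else 0))
    (hSp0 : ∀ n : ℕ, Sp n 0 =
      (if n = j then 1 else 0) + (if n = ℓ then 1 else 0))
    (hSp1 : ∀ n : ℕ, Sp n 1 = 2 * (if n = i then 1 else 0)) :
    (∃ v : Fin 2 → ℝ, 0 < v 0 ∧ 0 < v 1 ∧
        0 < (Sp - Sm).mulVec v i ∧ 0 < (Sp - Sm).mulVec v j) ∧
    ((fun r : Fin 2 => Sm i r) ≠ 0 ∧ (fun r : Fin 2 => Sm j r) ≠ 0) ∧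
    (∀ r : Fin 2, 0 < Sm i r + Sm j r) := by
  have emi0 : Sm i 0 = 1 := by
    rw [hSm0, if_pos rfl, if_neg (by omega)]; ring
  have emi1 : Sm i 1 = 0 := by
    rw [hSm1, if_neg (by omega), if_neg (by omega)]; ring
  have emj0 : Sm j 0 = 0 := by
    rw [hSm0, if_neg (by omega), if_neg (by omega)]; ring
  have emj1 : Sm j 1 = 1 := by
    rw [hSm1, if_pos rfl, if_neg (by omega)]; ring
  have epi0 : Sp i 0 = 0 := by
    rw [hSp0, if_neg (by omega), if_neg (by omega)]; ring
  have epi1 : Sp i 1 = 2 := by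
    rw [hSp1, if_pos rfl]; ring
  have epj1 : Sp j 1 = 0 := by
    rw [hSp1, if_neg (by omega)]; ring
  have epj0 : 1 ≤ Sp j 0 := by
    rw [hSp0, if_pos rfl]
    have : (0:ℝ) ≤ (if j = ℓ then 1 else 0) := by positivity
    linarith
  refine ⟨⟨![2, 3/2], by norm_num, by norm_num, ?_, ?_⟩, ⟨?_, ?_⟩, ?_⟩
  · simp only [mulVec, dotProduct, Fin.sum_univ_two, Matrix.sub_apply,
      emi0, emi1, epi0, epi1]
    norm_num
  · simp only [mulVec, dotProduct, Fin.sum_univ_two, Matrix.sub_apply,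
      emj0, emj1, epj1]
    have : (2:ℝ) ≤ (Sp j 0 - 0) * ![2, 3/2] 0 := by
      simp only [Matrix.cons_val_zero]; nlinarith
    simp only [Matrix.cons_val_one, Matrix.head_cons, Matrix.cons_val_zero] at this ⊢
    linarith
  · intro h
    have := congrFun h 0
    rw [emi0] at this
    simpa using this
  · intro h
    have := congrFun h 1
    rw [emj1] at this
    simpa using this
  · intro r
    fin_cases r
    · show 0 < Sm i 0 + Sm j 0
      rw [emi0, emj0]; norm_num
    · show 0 < Sm i 1 + Sm j 1
      rw [emi1, emj1]; norm_num
end
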